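/- Let X be an infinite exchangeable sequence of {0,1}-valued random variables. Then X is non-deterministic (i.e., its de Finetti measure is not supported in {0} ∪ {1}) if and only if SH_k(X_[n]) ≠ {0} for every n ≥ 2 and every k = 1,…,n. -/

import Mathlib

open MeasureTheory

namespace HoeffdingUrn

variable {Ω : Type} [MeasurableSpace Ω]

/-- `X` is an exchangeable sequence under `μ`: each `X i` is measurable and, for every `n`
and every permutation `π` of `{0,…,n-1}`, the law of `(X_{π 0},…,X_{π (n-1)})` coincides with
the law of `(X_0,…,X_{n-1})`. -/
def Exchangeable {D : Type} [MeasurableSpace D] (X : ℕ → Ω → D) (μ : Measure Ω) : Prop :=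
  (∀ i, Measurable (X i)) ∧
  ∀ (n : ℕ) (π : Equiv.Perm (Fin n)),
    Measure.map (fun ω (i : Fin n) => X ((π i : Fin n) : ℕ) ω) μ =
      Measure.map (fun ω (i : Fin n) => X (i : ℕ) ω) μ

/-- probability that the first `n` variables equal the vector `x`. -/
noncomputable def cylProb {D : Type} (X : ℕ → Ω → D) (μ : Measure Ω) {n : ℕ}
    (x : Fin n → D) : ℝ :=
  (μ {ω | ∀ i : Fin n, X (i : ℕ) ω = x i}).toReal

/-- `X` is non-deterministic: every finite configuration has positive probability. -/
def NonDeterministic {D : Type} (X : ℕ → Ω → D) (μ : Measure Ω) : Prop :=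
  ∀ n : ℕ, 1 ≤ n → ∀ x : Fin n → D, 0 < cylProb X μ x

/-- the canonical vector of `{0,1}ⁿ` (with `false` = 0) containing exactly `j` zeros. -/
def zeroVec (n j : ℕ) : Fin n → Bool := fun i => decide (j ≤ (i : ℕ))

/-- number of zeros (`false` entries) in a Boolean vector. -/
def zeroCountVec {n : ℕ} (x : Fin n → Bool) : ℕ :=
  (Finset.univ.filter fun i => x i = false).card

/-- `P_n(0^{(j)})`: the common probability of any configuration of `(X_1,…,X_n)` with
exactly `j` zeros. -/
noncomputable def Pz (X : ℕ → Ω → Bool) (μ : Measure Ω) (n j : ℕ) : ℝ :=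
  cylProb X μ (zeroVec n j)

/-- number of zeros among the first `n` variables. -/
def zeroCount (X : ℕ → Ω → Bool) (n : ℕ) (ω : Ω) : ℕ :=
  zeroCountVec (fun i : Fin n => X (i : ℕ) ω)

/-- `P^n_{n+v}(0^{(b)} ∣ 0^{(a)})`: conditional probability that `(X_1,…,X_{n+v})`
contains exactly `b` zeros given that `(X_1,…,X_n)` contains exactly `a` zeros. -/
noncomputable def condP (X : ℕ → Ω → Bool) (μ : Measure Ω) (n v b a : ℕ) : ℝ :=
  (μ {ω | zeroCount X (n + v) ω = b ∧ zeroCount X n ω = a}).toReal /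
    (μ {ω | zeroCount X n ω = a}).toReal

/-- a symmetric function of `k` variables. -/
def SymmFun {D : Type} {k : ℕ} (φ : (Fin k → D) → ℝ) : Prop :=
  ∀ (π : Equiv.Perm (Fin k)) (x : Fin k → D), φ (x ∘ π) = φ x

open Classical in
/-- the symmetric `U`-statistic with kernel `φ` of order `k`, based on `(X_1,…,X_n)`:
`F = ∑_{1 ≤ j₁ < … < j_k ≤ n} φ(X_{j₁},…,X_{j_k})`. -/
noncomputable def Ustat {D : Type} (X : ℕ → Ω → D) (n : ℕ) {k : ℕ}
    (φ : (Fin k → D) → ℝ) : Ω → ℝ :=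
  fun ω => ∑ j : Fin k → Fin n, if StrictMono j then φ (fun i => X ((j i : Fin n) : ℕ) ω) else 0

/-- complete degeneracy of the kernel `φ` of order `k`:
`E[φ(X_1,…,X_k) ∣ X_2,…,X_k] = 0` a.s. -/
def Degenerate {D : Type} [MeasurableSpace D] (X : ℕ → Ω → D) (μ : Measure Ω) {k : ℕ}
    (φ : (Fin k → D) → ℝ) : Prop :=
  μ[(fun ω => φ (fun i => X (i : ℕ) ω)) |
      MeasurableSpace.comap (fun ω (i : Fin (k - 1)) => X ((i : ℕ) + 1) ω) inferInstance]
    =ᵐ[μ] 0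

/-- `X` is Hoeffding decomposable: for every `n ≥ 2` and `1 ≤ k ≤ n`, a symmetric
`U`-statistic of order `k` based on `(X_1,…,X_n)` is orthogonal to `SU_{k-1}(X_{[n]})`
(equivalently, lies in `SH_k(X_{[n]})`) if and only if its kernel is completely degenerate. -/
def HoeffdingDecomposable {D : Type} [MeasurableSpace D] (X : ℕ → Ω → D) (μ : Measure Ω) :
    Prop :=
  ∀ n : ℕ, 2 ≤ n → ∀ k : ℕ, 1 ≤ k → k ≤ n → ∀ φ : (Fin k → D) → ℝ, SymmFun φ →
    ((∀ ψ : (Fin (k - 1) → D) → ℝ, SymmFun ψ →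
        ∫ ω, Ustat X n φ ω * Ustat X n ψ ω ∂μ = 0) ↔ Degenerate X μ φ)

/-- the symmetric Hoeffding spaces `SH_k(X_{[n]})`, `n ≥ 2`, `1 ≤ k ≤ n`, are all
non-trivial: each contains a `U`-statistic which is not a.s. zero. -/
def SHNontrivial {D : Type} (X : ℕ → Ω → D) (μ : Measure Ω) : Prop :=
  ∀ n : ℕ, 2 ≤ n → ∀ k : ℕ, 1 ≤ k → k ≤ n →
    ∃ φ : (Fin k → D) → ℝ, SymmFun φ ∧
      (∀ ψ : (Fin (k - 1) → D) → ℝ, SymmFun ψ →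
        ∫ ω, Ustat X n φ ω * Ustat X n ψ ω ∂μ = 0) ∧
      ∫ ω, (Ustat X n φ ω) ^ 2 ∂μ ≠ 0

/-- canonical symmetrization of a function of `m` variables. -/
noncomputable def symmetrize {D : Type} {m : ℕ} (f : (Fin m → D) → ℝ) : (Fin m → D) → ℝ :=
  fun x => (∑ π : Equiv.Perm (Fin m), f (x ∘ π)) / (Nat.factorial m : ℝ)

/-- the vector `(y_1,…,y_u,x_1,…,x_{n-u})` of length `n` (for `1 ≤ u ≤ n`). -/
noncomputable def headTail {D : Type} [Nonempty D] (u n : ℕ) (y : Fin u → D)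
    (x : Fin (n - 1) → D) : Fin n → D :=
  fun i =>
    if h : (i : ℕ) < u then y ⟨i, h⟩
    else if h2 : (i : ℕ) - u < n - 1 then x ⟨(i : ℕ) - u, h2⟩
    else Classical.arbitrary D

/-- `[T]^{(n-u)}_{n,n-1}`: the (version of the) conditional expectation
`E[T(X_1,…,X_n) ∣ X_{u+1},…,X_{u+n-1}]`, viewed as a function on `D^{n-1}`. -/
noncomputable def condProj {D : Type} [Fintype D] [Nonempty D] (X : ℕ → Ω → D)
    (μ : Measure Ω) (n u : ℕ) (T : (Fin n → D) → ℝ) : (Fin (n - 1) → D) → ℝ :=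
  fun x =>
    (∑ y : Fin u → D, T (headTail u n y x) * cylProb X μ (Fin.append y x)) / cylProb X μ x

/-- `X` is weakly independent: for every `n ≥ 2`, every symmetric `T : D^n → ℝ` with
`[T]^{(n-1)}_{n,n-1}(X_2,…,X_n) = 0` a.s. satisfies, for every `u = 2,…,n`,
`tilde-[T]^{(n-u)}_{n,n-1}(X_{u+1},…,X_{u+n-1}) = 0` a.s. -/
def WeaklyIndependent {D : Type} [Fintype D] [Nonempty D] (X : ℕ → Ω → D)
    (μ : Measure Ω) : Prop :=
  ∀ n : ℕ, 2 ≤ n → ∀ T : (Fin n → D) → ℝ, SymmFun T →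
    (∀ᵐ ω ∂μ, condProj X μ n 1 T (fun i : Fin (n - 1) => X ((i : ℕ) + 1) ω) = 0) →
    ∀ u : ℕ, 2 ≤ u → u ≤ n →
      ∀ᵐ ω ∂μ, symmetrize (condProj X μ n u T) (fun i : Fin (n - 1) => X (u + (i : ℕ)) ω) = 0

/-- `γ` is the de Finetti measure of the `{0,1}`-valued exchangeable sequence `X`. -/
def IsDeFinettiMeasure (X : ℕ → Ω → Bool) (μ : Measure Ω) (γ : Measure ℝ) : Prop :=
  IsProbabilityMeasure γ ∧ γ (Set.Icc (0 : ℝ) 1)ᶜ = 0 ∧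
  ∀ (n : ℕ) (x : Fin n → Bool),
    cylProb X μ x =
      ∫ θ, θ ^ (Finset.univ.filter fun i => x i = true).card *
        (1 - θ) ^ (Finset.univ.filter fun i => x i = false).card ∂γ

/-- the `n`-th moment of a measure on `[0,1] ⊆ ℝ`. -/
noncomputable def momentOf (γ : Measure ℝ) (n : ℕ) : ℝ := ∫ θ, θ ^ n ∂γ

/-- the Beta(a,b) distribution on `[0,1]`, with density `θ^{a-1}(1-θ)^{b-1}/B(a,b)`. -/
noncomputable def betaMeasure (a b : ℝ) : Measure ℝ :=
  (volume.restrict (Set.Ioo (0 : ℝ) 1)).withDensity fun θ =>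
    ENNReal.ofReal (θ ^ (a - 1) * (1 - θ) ^ (b - 1) /
      ∫ t in Set.Ioo (0 : ℝ) 1, t ^ (a - 1) * (1 - t) ^ (b - 1))

/-- the canonical completely degenerate kernel `φ_n^{(0)}` of order `n`:
`φ_n^{(0)}(0^{(k)}) = (-1)^k P_n(0^{(0)}) / P_n(0^{(k)})`. -/
noncomputable def phi0 (X : ℕ → Ω → Bool) (μ : Measure Ω) (n : ℕ) :
    (Fin n → Bool) → ℝ :=
  fun x => (-1 : ℝ) ^ zeroCountVec x * (Pz X μ n 0 / Pz X μ n (zeroCountVec x))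

/-- `f` is separately symmetric in its first `v` and last `m - v` variables. -/
def SepSymm {m : ℕ} (v : ℕ) (f : (Fin m → Bool) → ℝ) : Prop :=
  ∀ π : Equiv.Perm (Fin m), (∀ i : Fin m, (i : ℕ) < v ↔ ((π i : Fin m) : ℕ) < v) →
    ∀ x : Fin m → Bool, f (x ∘ π) = f x

/-- the canonical vector of `{0,1}^m` whose first `v` coordinates contain exactly `k`
zeros and whose last `m - v` coordinates contain exactly `l` zeros. -/
def blockVec (m v k l : ℕ) : Fin m → Bool :=
  fun i => if (i : ℕ) < v then decide (k ≤ (i : ℕ)) else decide (l ≤ (i : ℕ) - v)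

/-- `X` is an urn process in the sense of Hill, Lane and Sudderth: there are a measurable
`f : [0,1] → [0,1]` and positive integers `r`, `b` with
`P(X_{n+1} = 1 ∣ X_1,…,X_n) = f((r + X_1 + … + X_n)/(r + b + n))` a.s. for every `n ≥ 1`. -/
def IsUrnProcess (X : ℕ → Ω → Bool) (μ : Measure Ω) : Prop :=
  ∃ (f : ℝ → ℝ) (r b : ℕ), Measurable f ∧
    Set.MapsTo f (Set.Icc (0 : ℝ) 1) (Set.Icc (0 : ℝ) 1) ∧ 0 < r ∧ 0 < b ∧
    ∀ n : ℕ, 1 ≤ n →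
      (μ[(fun ω => if X n ω = true then (1 : ℝ) else 0) |
          MeasurableSpace.comap (fun ω (i : Fin n) => X (i : ℕ) ω) inferInstance]
        =ᵐ[μ] fun ω =>
          f (((r : ℝ) + ∑ i : Fin n, (if X (i : ℕ) ω = true then (1 : ℝ) else 0)) /
            ((r : ℝ) + (b : ℝ) + (n : ℝ))))


/-!
For a symmetric kernel `φ` of order `k`, the `U`-statistic `Ustat X n φ` only depends on the
number `c` of zeros among `X₀, …, X_{n-1}`, through its profile
`c ↦ ∑ⱼ φ(0^{(j)}) C(c, j) C(n - c, k - j)`; for `k ≤ n` these profiles are exactly the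
polynomial functions of degree `≤ k` on `{0, …, n}`. Inner products of `U`-statistics become the
weighted sums `∑_c q_c f(c) g(c)`, where `q_c` is the probability of `c` zeros.

If `X` is non-deterministic, every `q_c` is positive, so this form is definite; as the profiles
of order `k` span a space of dimension `k + 1` and those of order `k - 1` one of dimension `k`,
some nonzero profile of order `k` is orthogonal to all of order `k - 1`. Otherwise some `q_{c₀}`
vanishes for `m ≥ 2` variables; by Lagrange interpolation at the other `m` points, every profile
of order `m` then agrees `q`-almost everywhere with one of order `m - 1`, so `SH_m(X_[m]) = {0}`.
-/

open Finset

section ZeroCount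

lemma zeroCountVec_le {n : ℕ} (x : Fin n → Bool) : zeroCountVec x ≤ n :=
  (card_filter_le _ _).trans_eq (card_fin n)

def zeroCountFin {n : ℕ} (x : Fin n → Bool) : Fin (n + 1) :=
  ⟨zeroCountVec x, Nat.lt_succ_of_le (zeroCountVec_le x)⟩

lemma zeroCountVec_zeroVec {n j : ℕ} (h : j ≤ n) : zeroCountVec (zeroVec n j) = j := by
  simp only [zeroCountVec, zeroVec, decide_eq_false_iff_not, not_le]
  rw [Fin.card_filter_val_lt, min_eq_right h]

lemma zeroCountFin_zeroVec {k : ℕ} (j : Fin (k + 1)) : zeroCountFin (zeroVec k j) = j :=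
  Fin.ext (zeroCountVec_zeroVec (Nat.lt_succ_iff.mp j.2))

lemma zeroCountVec_comp_perm {n : ℕ} (x : Fin n → Bool) (π : Equiv.Perm (Fin n)) :
    zeroCountVec (x ∘ π) = zeroCountVec x :=
  card_equiv π fun i => by simp

lemma exists_perm_comp_eq {n : ℕ} {x y : Fin n → Bool} (h : zeroCountVec x = zeroCountVec y) :
    ∃ π : Equiv.Perm (Fin n), x ∘ π = y := by
  have hfalse (z : Fin n → Bool) : Fintype.card {i // z i = false} = zeroCountVec z :=
    Fintype.card_subtype _
  have hfib (b : Bool) : Fintype.card {i // y i = b} = Fintype.card {i // x i = b} := by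
    cases b
    · rw [hfalse, hfalse, h]
    · simp only [← Bool.not_eq_false]
      rw [Fintype.card_subtype_compl, Fintype.card_subtype_compl, hfalse, hfalse, h]
  exact ⟨Equiv.ofFiberEquiv fun b => Fintype.equivOfCardEq (hfib b),
    funext fun i => Equiv.ofFiberEquiv_map _ i⟩

lemma SymmFun.eq_zeroVec {k : ℕ} {φ : (Fin k → Bool) → ℝ} (hφ : SymmFun φ) (x : Fin k → Bool) :
    φ x = φ (zeroVec k (zeroCountVec x)) := by
  obtain ⟨π, hπ⟩ := exists_perm_comp_eq (x := zeroVec k (zeroCountVec x)) (y := x)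
    (zeroCountVec_zeroVec (zeroCountVec_le x))
  conv_lhs => rw [← hπ]
  exact hφ π _

end ZeroCount

section Subsets

variable {α : Type*} [DecidableEq α]

lemma card_filter_powersetCard_card_filter {U : Finset α} (p : α → Prop) [DecidablePred p]
    {k j : ℕ} (hj : j ≤ k) :
    #{s ∈ U.powersetCard k | #{a ∈ s | p a} = j}
      = (#{a ∈ U | p a}).choose j * (#{a ∈ U | ¬p a}).choose (k - j) := by
  rw [← card_powersetCard, ← card_powersetCard, ← card_product]
  refine card_nbij' (fun s => ({a ∈ s | p a}, {a ∈ s | ¬p a})) (fun t => t.1 ∪ t.2)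
    ?_ ?_ ?_ ?_
  · intro s hs
    simp only [coe_filter, mem_powersetCard, Set.mem_ofPred_eq, mem_coe, mem_product] at hs ⊢
    have : #{a ∈ s | p a} + #{a ∈ s | ¬p a} = k := hs.1.2 ▸ card_filter_add_card_filter_not p
    refine ⟨⟨filter_subset_filter _ hs.1.1, hs.2⟩, filter_subset_filter _ hs.1.1, ?_⟩
    omega
  · rintro ⟨a, b⟩ hab
    simp only [mem_coe, mem_product, mem_powersetCard, coe_filter, Set.mem_ofPred_eq] at hab ⊢
    obtain ⟨⟨haU, ha⟩, hbU, hb⟩ := hab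
    have hdisj : Disjoint a b := disjoint_filter_filter_not U U p |>.mono haU hbU
    have hfa : {x ∈ a ∪ b | p x} = a := by
      rw [filter_union, filter_true_of_mem fun x hx => (mem_filter.mp (haU hx)).2,
        filter_false_of_mem fun x hx => (mem_filter.mp (hbU hx)).2, union_empty]
    refine ⟨⟨union_subset (haU.trans (filter_subset _ _)) (hbU.trans (filter_subset _ _)),
      by rw [card_union_of_disjoint hdisj]; omega⟩, by rw [hfa, ha]⟩
  · intro s _
    exact filter_union_filter_not_eq p s
  · rintro ⟨a, b⟩ hab
    simp only [mem_coe, mem_product, mem_powersetCard] at hab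
    have ha (x) (hx : x ∈ a) : p x := (mem_filter.mp (hab.1.1 hx)).2
    have hb (x) (hx : x ∈ b) : ¬p x := (mem_filter.mp (hab.2.1 hx)).2
    ext x <;> simp only [mem_filter, mem_union] <;> grind

lemma sum_powersetCard_eq_sum_choose {M : Type*} [AddCommMonoid M] (U : Finset α)
    (p : α → Prop) [DecidablePred p] (k : ℕ) (F : ℕ → M) :
    ∑ s ∈ U.powersetCard k, F #{a ∈ s | p a}
      = ∑ j ∈ range (k + 1),
          ((#{a ∈ U | p a}).choose j * (#{a ∈ U | ¬p a}).choose (k - j)) • F j := by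
  have hmaps : ∀ s ∈ U.powersetCard k, #{a ∈ s | p a} ∈ range (k + 1) := fun s hs =>
    mem_range.mpr (Nat.lt_succ_of_le ((card_filter_le _ _).trans (mem_powersetCard.mp hs).2.le))
  rw [← sum_fiberwise_of_maps_to' hmaps]
  refine sum_congr rfl fun j hj => ?_
  rw [sum_const, card_filter_powersetCard_card_filter p (Nat.lt_succ_iff.mp (mem_range.mp hj))]

lemma sum_strictMono_eq_sum_powersetCard {M : Type*} [AddCommMonoid M] {k n : ℕ}
    [DecidablePred fun u : Fin k → Fin n => StrictMono u] (F : Finset (Fin n) → M) :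
    ∑ u : Fin k → Fin n with StrictMono u, F (univ.image u) = ∑ s ∈ univ.powersetCard k, F s := by
  refine sum_bij' (fun u _ => univ.image u) (fun s hs => s.orderEmbOfFin (mem_powersetCard.mp hs).2)
    ?_ ?_ ?_ ?_ fun _ _ => rfl
  · intro u hu
    rw [mem_powersetCard, card_image_of_injective _ (mem_filter.mp hu).2.injective, card_fin]
    exact ⟨subset_univ _, rfl⟩
  · intro s hs
    exact mem_filter.mpr ⟨mem_univ _, (s.orderEmbOfFin _).strictMono⟩
  · intro u hu
    have hcard : #(univ.image u) = k := by
      rw [card_image_of_injective _ (mem_filter.mp hu).2.injective, card_fin]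
    exact (orderEmbOfFin_unique hcard (fun i => mem_image_of_mem u (mem_univ i))
      (mem_filter.mp hu).2).symm
  · intro s hs
    rw [← coe_inj, coe_image, coe_univ, Set.image_univ, range_orderEmbOfFin]

end Subsets

section Profile

/-- The number of `k`-subsets of an `n`-set with `c` zeros that contain exactly `j` zeros. -/
noncomputable def binomVec (n k j : ℕ) : Fin (n + 1) → ℝ :=
  fun c => ((c : ℕ).choose j * (n - c).choose (k - j) : ℕ)

/-- The common value of `Ustat X n φ` on the configurations with `c` zeros. -/
noncomputable def profile (n : ℕ) {k : ℕ} (φ : (Fin k → Bool) → ℝ) : Fin (n + 1) → ℝ :=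
  ∑ j : Fin (k + 1), φ (zeroVec k j) • binomVec n k j

lemma zeroCountVec_comp_of_injective {n k : ℕ} (x : Fin n → Bool) {u : Fin k → Fin n}
    (hu : Function.Injective u) : zeroCountVec (x ∘ u) = #{i ∈ univ.image u | x i = false} := by
  rw [zeroCountVec, filter_image, card_image_of_injective _ hu]
  rfl

lemma card_filter_not_eq_false {n : ℕ} (x : Fin n → Bool) :
    #{i | ¬x i = false} = n - zeroCountVec x := by
  rw [filter_not, card_sdiff_of_subset (filter_subset _ _), card_fin]
  rfl

theorem Ustat_eq_profile {Ω : Type} (X : ℕ → Ω → Bool) (n : ℕ) {k : ℕ}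
    {φ : (Fin k → Bool) → ℝ} (hφ : SymmFun φ) (ω : Ω) :
    Ustat X n φ ω = profile n φ (zeroCountFin fun i : Fin n => X i ω) := by
  classical
  set x : Fin n → Bool := fun i => X i ω
  calc Ustat X n φ ω = ∑ u : Fin k → Fin n with StrictMono u, φ (x ∘ u) := (sum_filter _ _).symm
    _ = ∑ u : Fin k → Fin n with StrictMono u, φ (zeroVec k #{i ∈ univ.image u | x i = false}) :=
        sum_congr rfl fun u hu => by
          rw [hφ.eq_zeroVec, zeroCountVec_comp_of_injective x (mem_filter.mp hu).2.injective]
    _ = ∑ s ∈ univ.powersetCard k, φ (zeroVec k #{i ∈ s | x i = false}) :=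
        sum_strictMono_eq_sum_powersetCard fun s => φ (zeroVec k #{i ∈ s | x i = false})
    _ = ∑ j ∈ range (k + 1),
          ((zeroCountVec x).choose j * (n - zeroCountVec x).choose (k - j)) • φ (zeroVec k j) := by
        rw [sum_powersetCard_eq_sum_choose univ (fun i => x i = false) k
          (fun c => φ (zeroVec k c)), card_filter_not_eq_false]
        rfl
    _ = profile n φ (zeroCountFin x) := by
        rw [profile, ← Fin.sum_univ_eq_sum_range, Finset.sum_apply]
        refine sum_congr rfl fun j _ => ?_
        simp only [binomVec, zeroCountFin, Pi.smul_apply, smul_eq_mul, nsmul_eq_mul]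
        ring

end Profile

section ProfileSpace

open Polynomial Module

/-- The profiles of `SU_k(X_[n])`. -/
def profileSpace (n k : ℕ) : Submodule ℝ (Fin (n + 1) → ℝ) :=
  Submodule.span ℝ (Set.range fun j : Fin (k + 1) => binomVec n k j)

lemma profile_mem_profileSpace (n : ℕ) {k : ℕ} (φ : (Fin k → Bool) → ℝ) :
    profile n φ ∈ profileSpace n k :=
  Submodule.sum_mem _ fun j _ => Submodule.smul_mem _ _ (Submodule.subset_span ⟨j, rfl⟩)

lemma exists_symmFun_profile_eq {n k : ℕ} {g : Fin (n + 1) → ℝ} (hg : g ∈ profileSpace n k) :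
    ∃ φ : (Fin k → Bool) → ℝ, SymmFun φ ∧ profile n φ = g := by
  obtain ⟨a, rfl⟩ := (Submodule.mem_span_range_iff_exists_fun ℝ).mp hg
  refine ⟨fun x => a (zeroCountFin x), fun π x => ?_, ?_⟩
  · simp only [zeroCountFin, zeroCountVec_comp_perm]
  · simp only [profile, zeroCountFin_zeroVec]

/-- `binomVec n k j` vanishes at every `c < j` but not at `c = j`: the family is triangular. -/
lemma linearIndependent_binomVec {n k : ℕ} (hk : k ≤ n) :
    LinearIndependent ℝ fun j : Fin (k + 1) => binomVec n k j := by
  rw [Fintype.linearIndependent_iff]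
  intro g hg j
  induction j using WellFoundedLT.induction with
  | _ j ih =>
    have hjn : (j : ℕ) < n + 1 := by omega
    have hj := congrFun hg ⟨j, hjn⟩
    simp only [Finset.sum_apply, Pi.smul_apply, smul_eq_mul, Pi.zero_apply] at hj
    rw [sum_eq_single j] at hj
    · have hpos : binomVec n k j ⟨j, hjn⟩ ≠ 0 := by
        simp only [binomVec, Nat.choose_self, one_mul, Nat.cast_ne_zero]
        exact (Nat.choose_pos (by omega)).ne'
      exact (mul_eq_zero.mp hj).resolve_right hpos
    · intro i _ hij
      rcases lt_or_gt_of_ne hij with h | h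
      · rw [ih i h, zero_mul]
      · simp [binomVec, Nat.choose_eq_zero_of_lt (Fin.lt_def.mp h)]
    · exact fun h => absurd (mem_univ j) h

lemma finrank_profileSpace {n k : ℕ} (hk : k ≤ n) : finrank ℝ (profileSpace n k) = k + 1 := by
  rw [profileSpace, finrank_span_eq_card (linearIndependent_binomVec hk), Fintype.card_fin]

lemma finrank_profileSpace_le (n k : ℕ) : finrank ℝ (profileSpace n k) ≤ k + 1 :=
  (finrank_range_le_card _).trans_eq (Fintype.card_fin _)

noncomputable def evalVec (n : ℕ) : ℝ[X] →ₗ[ℝ] Fin (n + 1) → ℝ :=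
  LinearMap.pi fun c => leval ((c : ℕ) : ℝ)

lemma evalVec_apply (n : ℕ) (p : ℝ[X]) (c : Fin (n + 1)) : evalVec n p c = p.eval (c : ℝ) :=
  rfl

noncomputable def polySpace (n k : ℕ) : Submodule ℝ (Fin (n + 1) → ℝ) :=
  (degreeLT ℝ (k + 1)).map (evalVec n)

lemma finrank_polySpace_le (n k : ℕ) : finrank ℝ (polySpace n k) ≤ k + 1 := by
  have e := degreeLTEquiv ℝ (k + 1)
  have : Module.Finite ℝ (degreeLT ℝ (k + 1)) := e.symm.finiteDimensional
  exact (Submodule.finrank_map_le _ _).trans_eq (e.finrank_eq.trans (finrank_fin_fun ℝ))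

/-- `C(c, j) C(n - c, k - j) = (c)_j (n - c)_{k-j} / (j! (k - j)!)` with falling factorials. -/
lemma binomVec_mem_polySpace {n k j : ℕ} (hj : j ≤ k) : binomVec n k j ∈ polySpace n k := by
  set p : ℝ[X] := C ((j.factorial : ℝ)⁻¹ * ((k - j).factorial : ℝ)⁻¹) *
    (descPochhammer ℝ j * (descPochhammer ℝ (k - j)).comp (C (n : ℝ) - X))
  have hcomp : ((descPochhammer ℝ (k - j)).comp (C (n : ℝ) - X)).natDegree ≤ k - j := by
    refine natDegree_comp_le.trans ?_
    rw [descPochhammer_natDegree]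
    exact (Nat.mul_le_mul_left _ (by compute_degree!)).trans_eq (mul_one _)
  have hdeg : p.natDegree ≤ k := by
    refine natDegree_C_mul_le _ _ |>.trans <| natDegree_mul_le.trans ?_
    rw [descPochhammer_natDegree]
    omega
  refine ⟨p, mem_degreeLT.mpr ((degree_le_natDegree).trans_lt ?_), funext fun c => ?_⟩
  · exact_mod_cast Nat.lt_succ_of_le hdeg
  · have hc : (c : ℕ) ≤ n := Nat.lt_succ_iff.mp c.2
    simp only [p, evalVec_apply, eval_mul, eval_C, eval_comp, eval_sub, eval_X, binomVec]
    rw [← Nat.cast_sub hc, descPochhammer_eval_eq_descFactorial,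
      descPochhammer_eval_eq_descFactorial, Nat.descFactorial_eq_factorial_mul_choose,
      Nat.descFactorial_eq_factorial_mul_choose]
    push_cast
    field_simp

lemma profileSpace_eq_polySpace {n k : ℕ} (hk : k ≤ n) : profileSpace n k = polySpace n k :=
  Submodule.eq_of_le_of_finrank_le
    (Submodule.span_le.mpr <| Set.range_subset_iff.mpr fun j =>
      binomVec_mem_polySpace (Nat.lt_succ_iff.mp j.2))
    ((finrank_polySpace_le n k).trans (finrank_profileSpace hk).ge)

/-- Lagrange interpolation at the `m` points other than `c₀`. -/
lemma exists_symmFun_profile_eq_of_ne {m : ℕ} (hm : 1 ≤ m) (c₀ : Fin (m + 1))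
    (g : Fin (m + 1) → ℝ) :
    ∃ ψ : (Fin (m - 1) → Bool) → ℝ, SymmFun ψ ∧ ∀ c ≠ c₀, profile m ψ c = g c := by
  have hinj : Set.InjOn (fun c : Fin (m + 1) => ((c : ℕ) : ℝ)) (univ.erase c₀) :=
    fun a _ b _ h => Fin.ext (Nat.cast_injective h)
  set p := Lagrange.interpolate (univ.erase c₀) (fun c : Fin (m + 1) => ((c : ℕ) : ℝ)) g
  have hp : evalVec m p ∈ profileSpace m (m - 1) := by
    rw [profileSpace_eq_polySpace (Nat.sub_le m 1)]
    refine Submodule.mem_map_of_mem (mem_degreeLT.mpr ?_)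
    rw [Nat.sub_add_cancel hm]
    have := Lagrange.degree_interpolate_lt (r := g) hinj
    rwa [card_erase_of_mem (mem_univ _), card_fin, Nat.add_sub_cancel] at this
  obtain ⟨ψ, hψ, hψp⟩ := exists_symmFun_profile_eq hp
  exact ⟨ψ, hψ, fun c hc => by
    rw [hψp, evalVec_apply]
    exact Lagrange.eval_interpolate_at_node _ hinj (mem_erase.mpr ⟨hc, mem_univ c⟩)⟩

end ProfileSpace

section WeightedInner

open Module

lemma exists_ne_zero_forall_apply_eq_zero_of_finrank_lt {K W : Type*} [Field K] [AddCommGroup W]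
    [Module K W] (B : W →ₗ[K] W →ₗ[K] K) {A V : Submodule K W} [FiniteDimensional K A]
    [FiniteDimensional K V] (h : finrank K A < finrank K V) :
    ∃ v ∈ V, v ≠ 0 ∧ ∀ a ∈ A, B v a = 0 := by
  obtain ⟨v, hv, hv0⟩ := Submodule.exists_mem_ne_zero_of_ne_bot <|
    LinearMap.ker_ne_bot_of_finrank_lt (f := B.domRestrict₁₂ V A)
      (by rwa [Subspace.dual_finrank_eq])
  exact ⟨v, v.2, fun h0 => hv0 (Subtype.ext h0),
    fun a ha => LinearMap.congr_fun (LinearMap.mem_ker.mp hv) ⟨a, ha⟩⟩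

variable {ι : Type*} [Fintype ι]

noncomputable def weightedInner (q : ι → ℝ) : (ι → ℝ) →ₗ[ℝ] (ι → ℝ) →ₗ[ℝ] ℝ :=
  LinearMap.mk₂ ℝ (fun f g => ∑ i, q i * f i * g i)
    (fun f₁ f₂ g => by simp only [Pi.add_apply, mul_add, add_mul, sum_add_distrib])
    (fun a f g => by
      simp only [Pi.smul_apply, smul_eq_mul, mul_sum]; exact sum_congr rfl fun i _ => by ring)
    (fun f g₁ g₂ => by simp only [Pi.add_apply, mul_add, sum_add_distrib])
    (fun a f g => by
      simp only [Pi.smul_apply, smul_eq_mul, mul_sum]; exact sum_congr rfl fun i _ => by ring)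

lemma weightedInner_apply (q f g : ι → ℝ) : weightedInner q f g = ∑ i, q i * f i * g i :=
  rfl

lemma weightedInner_self_ne_zero {q : ι → ℝ} (hq : ∀ i, 0 < q i) {f : ι → ℝ} (hf : f ≠ 0) :
    weightedInner q f f ≠ 0 := by
  obtain ⟨i, hi⟩ := Function.ne_iff.mp hf
  refine (sum_pos' (fun j _ => ?_) ⟨i, mem_univ i, ?_⟩).ne'
  · rw [mul_assoc]; exact mul_nonneg (hq j).le (mul_self_nonneg _)
  · rw [mul_assoc]; exact mul_pos (hq i) (mul_self_pos.mpr hi)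

lemma weightedInner_congr_right {q f g g' : ι → ℝ} (h : ∀ i, q i ≠ 0 → g i = g' i) :
    weightedInner q f g = weightedInner q f g' :=
  sum_congr rfl fun i _ => by
    by_cases hq : q i = 0
    · simp [hq]
    · rw [h i hq]

end WeightedInner

section Probability

lemma cylProb_eq_measureReal {D : Type} (X : ℕ → Ω → D) (μ : Measure Ω) {n : ℕ}
    (x : Fin n → D) : cylProb X μ x = μ.real ((fun ω (i : Fin n) => X i ω) ⁻¹' {x}) := by
  simp only [cylProb, Measure.real, Set.preimage, Set.mem_singleton_iff, funext_iff]

lemma integral_comp_eq_sum_cylProb {D : Type} [Fintype D] [MeasurableSpace D]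
    [MeasurableSingletonClass D] {X : ℕ → Ω → D} (hX : ∀ i, Measurable (X i)) (μ : Measure Ω)
    [IsFiniteMeasure μ] {n : ℕ} (f : (Fin n → D) → ℝ) :
    ∫ ω, f (fun i : Fin n => X i ω) ∂μ = ∑ x, cylProb X μ x * f x := by
  have hV : Measurable fun ω (i : Fin n) => X i ω := measurable_pi_lambda _ fun i => hX i
  rw [← integral_map hV.aemeasurable (measurable_of_countable f).aestronglyMeasurable,
    integral_fintype (.of_finite)]
  simp only [map_measureReal_apply hV (measurableSet_singleton _), smul_eq_mul,
    cylProb_eq_measureReal]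

lemma cylProb_comp_perm {D : Type} [MeasurableSpace D] [MeasurableSingletonClass D]
    {X : ℕ → Ω → D} {μ : Measure Ω} (hexch : Exchangeable X μ) {n : ℕ}
    (π : Equiv.Perm (Fin n)) (x : Fin n → D) : cylProb X μ (x ∘ π) = cylProb X μ x := by
  have hmeas (σ : Equiv.Perm (Fin n)) : Measurable fun ω (i : Fin n) => X (σ i) ω :=
    measurable_pi_lambda _ fun i => hexch.1 _
  have hpre : (fun ω (i : Fin n) => X i ω) ⁻¹' {x ∘ π}
      = (fun ω (i : Fin n) => X (π.symm i) ω) ⁻¹' {x} := by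
    ext ω
    simp only [Set.mem_preimage, Set.mem_singleton_iff, funext_iff, Function.comp_apply]
    exact ⟨fun h i => by simpa using h (π.symm i), fun h i => by simpa using h (π i)⟩
  rw [cylProb_eq_measureReal, cylProb_eq_measureReal, hpre,
    ← map_measureReal_apply (hmeas π.symm) (measurableSet_singleton x), hexch.2,
    map_measureReal_apply (measurable_pi_lambda _ fun i => hexch.1 _) (measurableSet_singleton x)]

lemma cylProb_snoc_le {D : Type} (X : ℕ → Ω → D) (μ : Measure Ω) [IsFiniteMeasure μ] {n : ℕ}
    (x : Fin n → D) (d : D) : cylProb X μ (Fin.snoc x d : Fin (n + 1) → D) ≤ cylProb X μ x :=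
  ENNReal.toReal_mono (measure_ne_top _ _) <| measure_mono fun ω hω i => by
    simpa using hω i.castSucc

/-- The probability that exactly `c` of `X₀, …, X_{n-1}` vanish. -/
noncomputable def zeroCountWeight (X : ℕ → Ω → Bool) (μ : Measure Ω) (n : ℕ)
    (c : Fin (n + 1)) : ℝ :=
  ∑ x : Fin n → Bool with zeroCountFin x = c, cylProb X μ x

variable {X : ℕ → Ω → Bool}

theorem integral_Ustat_mul (hX : ∀ i, Measurable (X i)) (μ : Measure Ω) [IsFiniteMeasure μ]
    (n : ℕ) {k l : ℕ} {φ : (Fin k → Bool) → ℝ} {ψ : (Fin l → Bool) → ℝ} (hφ : SymmFun φ)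
    (hψ : SymmFun ψ) :
    ∫ ω, Ustat X n φ ω * Ustat X n ψ ω ∂μ
      = weightedInner (zeroCountWeight X μ n) (profile n φ) (profile n ψ) := by
  simp only [Ustat_eq_profile X n hφ, Ustat_eq_profile X n hψ]
  rw [integral_comp_eq_sum_cylProb hX μ
      fun x => profile n φ (zeroCountFin x) * profile n ψ (zeroCountFin x),
    weightedInner_apply, ← sum_fiberwise univ zeroCountFin]
  refine sum_congr rfl fun c _ => ?_
  rw [zeroCountWeight, sum_mul, sum_mul]
  exact sum_congr rfl fun x hx => by rw [(mem_filter.mp hx).2]; ring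

theorem integral_Ustat_sq (hX : ∀ i, Measurable (X i)) (μ : Measure Ω) [IsFiniteMeasure μ]
    (n : ℕ) {k : ℕ} {φ : (Fin k → Bool) → ℝ} (hφ : SymmFun φ) :
    ∫ ω, Ustat X n φ ω ^ 2 ∂μ
      = weightedInner (zeroCountWeight X μ n) (profile n φ) (profile n φ) := by
  simp only [sq]
  exact integral_Ustat_mul hX μ n hφ hφ

lemma zeroCountWeight_pos {μ : Measure Ω} (hND : NonDeterministic X μ) {n : ℕ} (hn : 1 ≤ n)
    (c : Fin (n + 1)) : 0 < zeroCountWeight X μ n c :=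
  sum_pos' (fun _ _ => ENNReal.toReal_nonneg)
    ⟨zeroVec n c, mem_filter.mpr ⟨mem_univ _, zeroCountFin_zeroVec c⟩, hND n hn _⟩

lemma zeroCountWeight_eq_zero_of_cylProb_eq_zero {μ : Measure Ω} (hexch : Exchangeable X μ) {n : ℕ}
    {y : Fin n → Bool} (hy : cylProb X μ y = 0) : zeroCountWeight X μ n (zeroCountFin y) = 0 :=
  sum_eq_zero fun x hx => by
    obtain ⟨π, rfl⟩ := exists_perm_comp_eq (congrArg Fin.val (mem_filter.mp hx).2).symm
    rw [cylProb_comp_perm hexch, hy]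

lemma exists_zeroCountWeight_eq_zero {μ : Measure Ω} (hexch : Exchangeable X μ) [IsFiniteMeasure μ]
    (h : ¬NonDeterministic X μ) : ∃ m, 2 ≤ m ∧ ∃ c, zeroCountWeight X μ m c = 0 := by
  simp only [NonDeterministic, not_forall, not_lt] at h
  obtain ⟨n, hn, x, hx⟩ := h
  have hy : cylProb X μ (Fin.snoc x true : Fin (n + 1) → Bool) = 0 :=
    le_antisymm ((cylProb_snoc_le X μ x true).trans hx) ENNReal.toReal_nonneg
  exact ⟨n + 1, by omega, _, zeroCountWeight_eq_zero_of_cylProb_eq_zero hexch hy⟩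

end Probability

/-- An infinite exchangeable `{0,1}`-valued sequence is non-deterministic
(every finite configuration has positive probability, equivalently its de Finetti measure
is not supported in `{0} ∪ {1}`) if and only if `SH_k(X_{[n]}) ≠ {0}` for every `n ≥ 2`
and every `k = 1,…,n`. -/
theorem nonDeterministic_iff_SH_nontrivial
    {Ω : Type} [MeasurableSpace Ω] (μ : Measure Ω) [IsProbabilityMeasure μ]
    (X : ℕ → Ω → Bool) (hexch : Exchangeable X μ) :
    NonDeterministic X μ ↔ SHNontrivial X μ := by
  constructor
  · intro hND n hn k hk hkn
    have hdim :
        Module.finrank ℝ (profileSpace n (k - 1)) < Module.finrank ℝ (profileSpace n k) := by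
      rw [finrank_profileSpace hkn]
      have := finrank_profileSpace_le n (k - 1)
      omega
    obtain ⟨g, hg, hg0, horth⟩ :=
      exists_ne_zero_forall_apply_eq_zero_of_finrank_lt (weightedInner (zeroCountWeight X μ n)) hdim
    obtain ⟨φ, hφ, rfl⟩ := exists_symmFun_profile_eq hg
    refine ⟨φ, hφ, fun ψ hψ => ?_, ?_⟩
    · rw [integral_Ustat_mul hexch.1 μ n hφ hψ]
      exact horth _ (profile_mem_profileSpace n ψ)
    · rw [integral_Ustat_sq hexch.1 μ n hφ]
      exact weightedInner_self_ne_zero (zeroCountWeight_pos hND (by omega)) hg0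
  · intro hSH
    by_contra hND
    obtain ⟨m, hm, c₀, hc₀⟩ := exists_zeroCountWeight_eq_zero hexch hND
    obtain ⟨φ, hφ, horth, hne⟩ := hSH m hm m (by omega) le_rfl
    obtain ⟨ψ, hψ, hψφ⟩ := exists_symmFun_profile_eq_of_ne (by omega) c₀ (profile m φ)
    apply hne
    rw [integral_Ustat_sq hexch.1 μ m hφ, ← horth ψ hψ, integral_Ustat_mul hexch.1 μ m hφ hψ]
    exact weightedInner_congr_right fun c hc => (hψφ c (by rintro rfl; exact hc hc₀)).symm

end HoeffdingUrn
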